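/- Full symmetry of the covariant derivative of the third-derivative tensor of a Hessian metric: the 4-tensor (∇T)_{lijk} := u_{,ijkl} − Γ^s_{li} u_{,sjk} − Γ^s_{lj} u_{,isk} − Γ^s_{lk} u_{,ijs} is invariant under every permutation of the four indices (l, i, j, k), at every point of N. -/

import Mathlib

open scoped BigOperators
noncomputable section

namespace KRS

variable {n : ℕ}

/-- Partial derivative of `f` in the `i`-th coordinate direction. -/
def pd (i : Fin n) (f : (Fin n → ℝ) → ℝ) : (Fin n → ℝ) → ℝ :=
  fun x => fderiv ℝ f x (Pi.single i 1)

/-- The Hessian matrix `g(x)` of `u`, with entries `g_{ij} = ∂²u/∂x^i∂x^j`. -/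
def hessian (u : (Fin n → ℝ) → ℝ) (x : Fin n → ℝ) : Matrix (Fin n) (Fin n) ℝ :=
  Matrix.of fun i j => pd i (pd j u) x

/-- The inverse matrix `g(x)⁻¹`, with entries `g^{ij}`. -/
def ginv (u : (Fin n → ℝ) → ℝ) (x : Fin n → ℝ) : Matrix (Fin n) (Fin n) ℝ :=
  (hessian u x)⁻¹

/-- Third iterated partial derivative `u_{,ijk}`. -/
def d3 (u : (Fin n → ℝ) → ℝ) (i j k : Fin n) : (Fin n → ℝ) → ℝ :=
  pd i (pd j (pd k u))

/-- Fourth iterated partial derivative `u_{,ijkl}`. -/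
def d4 (u : (Fin n → ℝ) → ℝ) (i j k l : Fin n) : (Fin n → ℝ) → ℝ :=
  pd i (pd j (pd k (pd l u)))

/-- Christoffel symbols `Γ^k_{ij} = (1/2) g^{kl}(∂_i g_{jl} + ∂_j g_{il} − ∂_l g_{ij})`. -/
def Christoffel (u : (Fin n → ℝ) → ℝ) (k i j : Fin n) : (Fin n → ℝ) → ℝ :=
  fun x => (1/2) * ∑ l, ginv u x k l * (d3 u i j l x + d3 u j i l x - d3 u l i j x)

/-- Riemann curvature tensor
`Rm_{ijkl} = g_{is}(∂_k Γ^s_{lj} − ∂_l Γ^s_{kj} + Γ^s_{kp} Γ^p_{lj} − Γ^s_{lp} Γ^p_{kj})`. -/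
def Rm (u : (Fin n → ℝ) → ℝ) (i j k l : Fin n) : (Fin n → ℝ) → ℝ :=
  fun x => ∑ s, hessian u x i s *
    (pd k (Christoffel u s l j) x - pd l (Christoffel u s k j) x
      + ∑ p, Christoffel u s k p x * Christoffel u p l j x
      - ∑ p, Christoffel u s l p x * Christoffel u p k j x)

/-- Ricci tensor `Ric_{ij} = ∂_k Γ^k_{ij} − ∂_j Γ^k_{ik} + Γ^k_{kp} Γ^p_{ij} − Γ^k_{jp} Γ^p_{ik}`. -/
def Ricci (u : (Fin n → ℝ) → ℝ) (i j : Fin n) : (Fin n → ℝ) → ℝ :=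
  fun x => (∑ k, pd k (Christoffel u k i j) x) - (∑ k, pd j (Christoffel u k i k) x)
    + (∑ k, ∑ p, Christoffel u k k p x * Christoffel u p i j x)
    - (∑ k, ∑ p, Christoffel u k j p x * Christoffel u p i k x)

/-- Scalar curvature `s = g^{ij} Ric_{ij}`. -/
def scalarCurv (u : (Fin n → ℝ) → ℝ) : (Fin n → ℝ) → ℝ :=
  fun x => ∑ i, ∑ j, ginv u x i j * Ricci u i j x

/-- Covariant Hessian `(∇²φ)_{ij} = φ_{,ij} − Γ^k_{ij} φ_{,k}`. -/
def covHess (u φ : (Fin n → ℝ) → ℝ) (i j : Fin n) : (Fin n → ℝ) → ℝ :=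
  fun x => pd i (pd j φ) x - ∑ k, Christoffel u k i j x * pd k φ x

/-- Laplace–Beltrami operator `Δφ = g^{ij} (∇²φ)_{ij}`. -/
def laplacian (u φ : (Fin n → ℝ) → ℝ) : (Fin n → ℝ) → ℝ :=
  fun x => ∑ i, ∑ j, ginv u x i j * covHess u φ i j x

/-- Weighted (drift) Laplacian `Δ_φ F = ΔF − g^{ij} φ_{,i} F_{,j}`. -/
def driftLap (u φ F : (Fin n → ℝ) → ℝ) : (Fin n → ℝ) → ℝ :=
  fun x => laplacian u F x - ∑ i, ∑ j, ginv u x i j * pd i φ x * pd j F x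

/-- Bakry–Émery Ricci tensor `(Ric_φ)_{ij} = Ric_{ij} + (∇²φ)_{ij}`. -/
def ricciPhi (u φ : (Fin n → ℝ) → ℝ) (i j : Fin n) : (Fin n → ℝ) → ℝ :=
  fun x => Ricci u i j x + covHess u φ i j x

/-- Pointwise squared `g`-norm of the third derivative tensor:
`|u_{,ijk}|²_g = g^{ip} g^{jq} g^{kr} u_{,ijk} u_{,pqr}`. -/
def norm3 (u : (Fin n → ℝ) → ℝ) : (Fin n → ℝ) → ℝ :=
  fun x => ∑ i, ∑ j, ∑ k, ∑ p, ∑ q, ∑ r,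
    ginv u x i p * ginv u x j q * ginv u x k r * d3 u i j k x * d3 u p q r x

/-- The canonical weight function `φ = (1/2)(u_{,p} ξ^p + v_q x^q)`. -/
def weight (u : (Fin n → ℝ) → ℝ) (ξ v : Fin n → ℝ) : (Fin n → ℝ) → ℝ :=
  fun x => (1/2) * ((∑ p, pd p u x * ξ p) + ∑ q, v q * x q)

/-- `u` solves the weighted Monge–Ampère equation
`log det g(x) = −v_p x^p + u_{,q}(x) ξ^q + c` on `N`. -/
def MAeq (u : (Fin n → ℝ) → ℝ) (N : Set (Fin n → ℝ)) (v ξ : Fin n → ℝ) (c : ℝ) : Prop :=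
  ∀ x ∈ N, Real.log (hessian u x).det = -(∑ p, v p * x p) + (∑ q, pd q u x * ξ q) + c

/-- Covariant derivative of the third derivative tensor:
`(∇T)_{lijk} = u_{,ijkl} − Γ^s_{li} u_{,sjk} − Γ^s_{lj} u_{,isk} − Γ^s_{lk} u_{,ijs}`. -/
def covT (u : (Fin n → ℝ) → ℝ) (l i j k : Fin n) : (Fin n → ℝ) → ℝ :=
  fun x => d4 u i j k l x - (∑ s, Christoffel u s l i x * d3 u s j k x)
    - (∑ s, Christoffel u s l j x * d3 u i s k x)
    - (∑ s, Christoffel u s l k x * d3 u i j s x)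

/-- Completeness of the Hessian metric `g = D²u` on `N`: every C¹ curve
`γ : [0,1) → N` that eventually leaves every compact subset of `N`
has infinite `g`-length. -/
def HessComplete (u : (Fin n → ℝ) → ℝ) (N : Set (Fin n → ℝ)) : Prop :=
  ∀ γ : ℝ → (Fin n → ℝ),
    ContDiffOn ℝ 1 γ (Set.Ico (0:ℝ) 1) →
    (∀ t ∈ Set.Ico (0:ℝ) 1, γ t ∈ N) →
    (∀ K : Set (Fin n → ℝ), IsCompact K → K ⊆ N →
      ∃ tK ∈ Set.Ico (0:ℝ) 1, ∀ t ∈ Set.Ioo tK 1, γ t ∉ K) →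
    ∫⁻ t in Set.Ioo (0:ℝ) 1,
      ENNReal.ofReal (Real.sqrt (∑ i, ∑ j,
        hessian u (γ t) i j * deriv γ t i * deriv γ t j)) = ⊤



open scoped ContDiff

section Helpers

variable {N : Set (Fin n → ℝ)}

lemma pd_congr (hN : IsOpen N) {f g : (Fin n → ℝ) → ℝ} (h : Set.EqOn f g N) (i : Fin n) :
    Set.EqOn (pd i f) (pd i g) N := by
  intro x hx
  have hfg : f =ᶠ[nhds x] g := Filter.eventuallyEq_of_mem (hN.mem_nhds hx) h
  simp only [pd, hfg.fderiv_eq]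

lemma pd_smooth (hN : IsOpen N) {f : (Fin n → ℝ) → ℝ} (hf : ContDiffOn ℝ ∞ f N) (i : Fin n) :
    ContDiffOn ℝ ∞ (pd i f) N := by
  have h1 : ContDiffOn ℝ ∞ (fderiv ℝ f) N := ((contDiffOn_infty_iff_fderiv_of_isOpen hN).1 hf).2
  exact h1.clm_apply contDiffOn_const

lemma pd_pd (hN : IsOpen N) {f : (Fin n → ℝ) → ℝ} (hf : ContDiffOn ℝ ∞ f N) (i j : Fin n)
    {x : Fin n → ℝ} (hx : x ∈ N) :
    pd i (pd j f) x = fderiv ℝ (fderiv ℝ f) x (Pi.single i 1) (Pi.single j 1) := by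
  have h1 : ContDiffOn ℝ ∞ (fderiv ℝ f) N := ((contDiffOn_infty_iff_fderiv_of_isOpen hN).1 hf).2
  have hd : DifferentiableAt ℝ (fderiv ℝ f) x :=
    (h1.contDiffAt (hN.mem_nhds hx)).differentiableAt (by decide)
  show fderiv ℝ (fun y => fderiv ℝ f y (Pi.single j 1)) x (Pi.single i 1) = _
  rw [fderiv_clm_apply hd (differentiableAt_const _)]
  simp

lemma pd_comm (hN : IsOpen N) {f : (Fin n → ℝ) → ℝ} (hf : ContDiffOn ℝ ∞ f N) (i j : Fin n) :
    Set.EqOn (pd i (pd j f)) (pd j (pd i f)) N := by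
  intro x hx
  have hsymm : IsSymmSndFDerivAt ℝ f x :=
    (hf.contDiffAt (hN.mem_nhds hx)).isSymmSndFDerivAt (by simp only [minSmoothness_of_isRCLikeNormedField]; exact WithTop.coe_le_coe.2 (le_top : (2 : ℕ∞) ≤ ⊤))
  rw [pd_pd hN hf i j hx, pd_pd hN hf j i hx]
  exact hsymm _ _

variable {u : (Fin n → ℝ) → ℝ}

lemma d3_A12 (hN : IsOpen N) (hu : ContDiffOn ℝ ∞ u N) (i j k : Fin n) :
    Set.EqOn (d3 u i j k) (d3 u j i k) N :=
  pd_comm hN (pd_smooth hN hu k) i j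

lemma d3_A23 (hN : IsOpen N) (hu : ContDiffOn ℝ ∞ u N) (i j k : Fin n) :
    Set.EqOn (d3 u i j k) (d3 u i k j) N :=
  pd_congr hN (pd_comm hN hu j k) i

lemma d3_rot (hN : IsOpen N) (hu : ContDiffOn ℝ ∞ u N) (i j k : Fin n)
    {x : Fin n → ℝ} (hx : x ∈ N) : d3 u i j k x = d3 u k i j x :=
  (d3_A23 hN hu i j k hx).trans (d3_A12 hN hu i k j hx)

lemma d4_A12 (hN : IsOpen N) (hu : ContDiffOn ℝ ∞ u N) (i j k l : Fin n) :
    Set.EqOn (d4 u i j k l) (d4 u j i k l) N :=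
  pd_comm hN (pd_smooth hN (pd_smooth hN hu l) k) i j

lemma d4_A23 (hN : IsOpen N) (hu : ContDiffOn ℝ ∞ u N) (i j k l : Fin n) :
    Set.EqOn (d4 u i j k l) (d4 u i k j l) N :=
  pd_congr hN (pd_comm hN (pd_smooth hN hu l) j k) i

lemma d4_A34 (hN : IsOpen N) (hu : ContDiffOn ℝ ∞ u N) (i j k l : Fin n) :
    Set.EqOn (d4 u i j k l) (d4 u i j l k) N :=
  pd_congr hN (pd_congr hN (pd_comm hN hu k l) j) i

lemma d4_swap14 (hN : IsOpen N) (hu : ContDiffOn ℝ ∞ u N) (i j k l : Fin n)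
    {x : Fin n → ℝ} (hx : x ∈ N) : d4 u i j k l x = d4 u l j k i x :=
  calc d4 u i j k l x = d4 u i j l k x := d4_A34 hN hu i j k l hx
    _ = d4 u i l j k x := d4_A23 hN hu i j l k hx
    _ = d4 u l i j k x := d4_A12 hN hu i l j k hx
    _ = d4 u l j i k x := d4_A23 hN hu l i j k hx
    _ = d4 u l j k i x := d4_A34 hN hu l j i k hx

lemma hess_symm (hN : IsOpen N) (hu : ContDiffOn ℝ ∞ u N)
    {x : Fin n → ℝ} (hx : x ∈ N) : (hessian u x).transpose = hessian u x := by
  ext i j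
  simp only [Matrix.transpose_apply, hessian, Matrix.of_apply]
  exact pd_comm hN hu j i hx

lemma ginv_symm (hN : IsOpen N) (hu : ContDiffOn ℝ ∞ u N)
    {x : Fin n → ℝ} (hx : x ∈ N) (i j : Fin n) : ginv u x i j = ginv u x j i := by
  have h : (ginv u x).transpose = ginv u x := by
    rw [ginv, Matrix.transpose_nonsing_inv, hess_symm hN hu hx]
  calc ginv u x i j = (ginv u x).transpose j i := (Matrix.transpose_apply _ _ _).symm
    _ = ginv u x j i := by rw [h]

lemma Christoffel_eq (hN : IsOpen N) (hu : ContDiffOn ℝ ∞ u N)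
    {x : Fin n → ℝ} (hx : x ∈ N) (s i j : Fin n) :
    Christoffel u s i j x = (1/2) * ∑ t, ginv u x s t * d3 u i j t x := by
  simp only [Christoffel]
  congr 1
  apply Finset.sum_congr rfl
  intro t _
  rw [d3_A12 hN hu j i t hx, ← d3_rot hN hu i j t hx]
  ring

private lemma symm4 {α : Type*} (f : α → α → α → α → ℝ)
    (h01 : ∀ a b c d, f a b c d = f b a c d)
    (h12 : ∀ a b c d, f a b c d = f a c b d)
    (h23 : ∀ a b c d, f a b c d = f a b d c) (σ : Equiv.Perm (Fin 4)) (idx : Fin 4 → α) :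
    f (idx 0) (idx 1) (idx 2) (idx 3) = f (idx (σ 0)) (idx (σ 1)) (idx (σ 2)) (idx (σ 3)) := by
  have h02 : ∀ a b c d, f a b c d = f c b a d := fun a b c d => by
    rw [h12, h01, h12]
  have h03 : ∀ a b c d, f a b c d = f d b c a := fun a b c d => by
    rw [h23, h02, h23]
  have h13 : ∀ a b c d, f a b c d = f a d c b := fun a b c d => by
    rw [h23, h12, h23]
  have hswap : ∀ (x y : Fin 4) (idx : Fin 4 → α),
      f (idx (Equiv.swap x y 0)) (idx (Equiv.swap x y 1)) (idx (Equiv.swap x y 2))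
        (idx (Equiv.swap x y 3)) = f (idx 0) (idx 1) (idx 2) (idx 3) := by
    intro x y idx
    fin_cases x <;> fin_cases y <;>
      simp only [Equiv.swap_apply_def] <;>
      norm_num <;>
      first
        | rfl
        | exact (h01 _ _ _ _).symm
        | exact (h12 _ _ _ _).symm
        | exact (h23 _ _ _ _).symm
        | exact (h02 _ _ _ _).symm
        | exact (h03 _ _ _ _).symm
        | exact (h13 _ _ _ _).symm
        | exact h01 _ _ _ _
        | exact h12 _ _ _ _
        | exact h23 _ _ _ _
        | exact h02 _ _ _ _
        | exact h03 _ _ _ _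
        | exact h13 _ _ _ _
  revert idx
  refine Equiv.Perm.swap_induction_on σ (fun idx => rfl) ?_
  intro τ x y _ ih idx
  calc f (idx 0) (idx 1) (idx 2) (idx 3)
      = f ((idx ∘ Equiv.swap x y) 0) ((idx ∘ Equiv.swap x y) 1) ((idx ∘ Equiv.swap x y) 2)
          ((idx ∘ Equiv.swap x y) 3) := (hswap x y idx).symm
    _ = f ((idx ∘ Equiv.swap x y) (τ 0)) ((idx ∘ Equiv.swap x y) (τ 1))
          ((idx ∘ Equiv.swap x y) (τ 2)) ((idx ∘ Equiv.swap x y) (τ 3)) := ih (idx ∘ Equiv.swap x y)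
    _ = f (idx ((Equiv.swap x y * τ) 0)) (idx ((Equiv.swap x y * τ) 1))
          (idx ((Equiv.swap x y * τ) 2)) (idx ((Equiv.swap x y * τ) 3)) := rfl

end Helpers

theorem covT_fully_symmetric {n : ℕ} (hn : 1 ≤ n) (N : Set (Fin n → ℝ)) (hNopen : IsOpen N)
    (hNne : N.Nonempty) (u : (Fin n → ℝ) → ℝ) (hu : ContDiffOn ℝ (⊤ : ℕ∞) u N)
    (hpos : ∀ x ∈ N, (hessian u x).PosDef) :
    ∀ x ∈ N, ∀ idx : Fin 4 → Fin n, ∀ σ : Equiv.Perm (Fin 4),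
      covT u (idx 0) (idx 1) (idx 2) (idx 3) x =
        covT u (idx (σ 0)) (idx (σ 1)) (idx (σ 2)) (idx (σ 3)) x := by
  intro x hx idx sigma
  have hu' : ContDiffOn ℝ ∞ u N := hu.of_le (by simp)
  set F : Fin n → Fin n → Fin n → Fin n → ℝ :=
    fun a b c d => ∑ s, ∑ t, ginv u x s t * d3 u a b t x * d3 u s c d x with hFdef
  clear_value F
  have hFapp : ∀ a b c d : Fin n,
      F a b c d = ∑ s, ∑ t, ginv u x s t * d3 u a b t x * d3 u s c d x := by
    intro a b c d; rw [hFdef]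
  have hsum : ∀ a b c d : Fin n,
      (∑ s, Christoffel u s a b x * d3 u s c d x) = (1/2) * F a b c d := by
    intro a b c d
    rw [hFapp, Finset.mul_sum]
    apply Finset.sum_congr rfl
    intro s _
    rw [Christoffel_eq hNopen hu' hx s a b, mul_assoc, Finset.sum_mul]
  have hFab : ∀ a b c d : Fin n, F a b c d = F b a c d := by
    intro a b c d
    rw [hFapp, hFapp]
    apply Finset.sum_congr rfl; intro s _
    apply Finset.sum_congr rfl; intro t _
    rw [d3_A12 hNopen hu' a b t hx]
  have hFcd : ∀ a b c d : Fin n, F a b c d = F a b d c := by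
    intro a b c d
    rw [hFapp, hFapp]
    apply Finset.sum_congr rfl; intro s _
    apply Finset.sum_congr rfl; intro t _
    rw [d3_A23 hNopen hu' s c d hx]
  have hFswap : ∀ a b c d : Fin n, F a b c d = F c d a b := by
    intro a b c d
    rw [hFapp, hFapp]
    rw [Finset.sum_comm]
    apply Finset.sum_congr rfl; intro p _
    apply Finset.sum_congr rfl; intro q _
    rw [ginv_symm hNopen hu' hx q p, d3_rot hNopen hu' a b p hx,
      ← d3_rot hNopen hu' c d q hx]
    ring
  have key : ∀ a b c d : Fin n, covT u a b c d x
      = d4 u b c d a x - (1/2) * F a b c d - (1/2) * F a c b d - (1/2) * F a d b c := by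
    intro a b c d
    have e2 : (∑ s, Christoffel u s a c x * d3 u b s d x) = (1/2) * F a c b d := by
      rw [← hsum a c b d]
      apply Finset.sum_congr rfl; intro s _
      rw [d3_A12 hNopen hu' b s d hx]
    have e3 : (∑ s, Christoffel u s a d x * d3 u b c s x) = (1/2) * F a d b c := by
      rw [← hsum a d b c]
      apply Finset.sum_congr rfl; intro s _
      rw [d3_rot hNopen hu' b c s hx]
    show d4 u b c d a x - (∑ s, Christoffel u s a b x * d3 u s c d x)
        - (∑ s, Christoffel u s a c x * d3 u b s d x)
        - (∑ s, Christoffel u s a d x * d3 u b c s x) = _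
    rw [hsum a b c d, e2, e3]
  have h01 : ∀ a b c d : Fin n, covT u a b c d x = covT u b a c d x := by
    intro a b c d
    rw [key a b c d, key b a c d, d4_swap14 hNopen hu' a c d b hx,
      hFab b a c d, hFswap b c a d, hFswap b d a c]
    ring
  have h12 : ∀ a b c d : Fin n, covT u a b c d x = covT u a c b d x := by
    intro a b c d
    rw [key a b c d, key a c b d, d4_A12 hNopen hu' c b d a hx, hFcd a d c b]
    ring
  have h23 : ∀ a b c d : Fin n, covT u a b c d x = covT u a b d c x := by
    intro a b c d
    rw [key a b c d, key a b d c, d4_A23 hNopen hu' b d c a hx, hFcd a b d c]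
    ring
  exact symm4 (fun a b c d => covT u a b c d x) h01 h12 h23 sigma idx


end KRS
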